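/- Let A be a Noetherian ring and let I be an ideal of A containing a non-zerodivisor. Then the ideal I_> is integrally closed: every element of A that is integral over I_> belongs to I_>. -/

import Mathlib

open Filter Polynomial

/-- An element `b` is weakly subintegral over a subset (subring) `R` of `B`:
there are `q ≥ 0` and `a_i ∈ R` (`1 ≤ i ≤ 2q+1`) with
`b^n + ∑_{i=1}^n (n choose i) a_i b^{n-i} = 0` for `q+1 ≤ n ≤ 2q+1`. -/
def WSubOver {B : Type*} [CommRing B] (R : Set B) (b : B) : Prop :=
  ∃ q : ℕ, ∃ a : ℕ → B, (∀ i, a i ∈ R) ∧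
    ∀ n, q + 1 ≤ n → n ≤ 2 * q + 1 →
      b ^ n + ∑ i ∈ Finset.Icc 1 n, (n.choose i : B) * a i * b ^ (n - i) = 0

/-- An element `b` is weakly subintegral over an ideal `I`:
there are `q ≥ 0` and `a_i ∈ I^i` with
`b^n + ∑_{i=1}^n (n choose i) a_i b^{n-i} = 0` for `q+1 ≤ n ≤ 2q+1`.
The set of such elements is the weak subintegral closure `*I`. -/
def WSubIdeal {A : Type*} [CommRing A] (I : Ideal A) (b : A) : Prop :=
  ∃ q : ℕ, ∃ a : ℕ → A, (∀ i, a i ∈ I ^ i) ∧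
    ∀ n, q + 1 ≤ n → n ≤ 2 * q + 1 →
      b ^ n + ∑ i ∈ Finset.Icc 1 n, (n.choose i : A) * a i * b ^ (n - i) = 0

/-- `a` is integral over the ideal `I`: `a^n + c_1 a^{n-1} + ⋯ + c_n = 0` with `c_i ∈ I^i`.
The set of such elements is the integral closure `Ī` of `I`. -/
def IntegralOverIdeal {A : Type*} [CommRing A] (I : Ideal A) (a : A) : Prop :=
  ∃ n : ℕ, 0 < n ∧ ∃ c : ℕ → A, (∀ i, c i ∈ I ^ i) ∧
    a ^ n + ∑ i ∈ Finset.Icc 1 n, c i * a ^ (n - i) = 0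

/-- `J` is a reduction of `I`: `J ⊆ I` and `J̄ = Ī`. -/
def IsReduction {A : Type*} [CommRing A] (J I : Ideal A) : Prop :=
  J ≤ I ∧ ∀ x, IntegralOverIdeal J x ↔ IntegralOverIdeal I x

/-- `J` is a minimal reduction of `I`. -/
def IsMinimalReduction {A : Type*} [CommRing A] (J I : Ideal A) : Prop :=
  IsReduction J I ∧ ∀ J' : Ideal A, IsReduction J' I → J' ≤ J → J' = J

/-- `ord_I(a) = max {n | a ∈ I^n}` (with value `∞` if `a ∈ ⋂ I^n`). -/
noncomputable def ordI {A : Type*} [CommRing A] (I : Ideal A) (a : A) : ℕ∞ :=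
  ⨆ (n : ℕ) (_ : a ∈ I ^ n), (n : ℕ∞)

/-- The sequence `ord_I(a^n)/n`, whose limit is the asymptotic Samuel function `v̄_I(a)`. -/
noncomputable def samuelSeq {A : Type*} [CommRing A] (I : Ideal A) (a : A) (n : ℕ) : ENNReal :=
  (ordI I (a ^ n) : ENNReal) / (n : ENNReal)

/-- `a ∈ I_>`, i.e. `v̄_I(a) > 1`, where `v̄_I(a)` is the limit of `ord_I(a^n)/n`
(this limit always exists in `[0,∞]`). -/
def MemIgt {A : Type*} [CommRing A] (I : Ideal A) (a : A) : Prop :=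
  ∃ L : ENNReal, 1 < L ∧ Filter.Tendsto (samuelSeq I a) Filter.atTop (nhds L)

/-!
By Fekete's lemma, applied to the superadditive sequence `n ↦ ord_I(x^n)`, the limit
`v̄_I(x)` exists and equals `sup_n ord_I(x^n)/n`. It behaves like a valuation with values in
`[0, ∞]`: `v̄_I(xy) ≥ v̄_I(x) + v̄_I(y)`, `v̄_I(x + y) ≥ min (v̄_I(x), v̄_I(y))` and
`v̄_I(x^k) = k v̄_I(x)`. If `a^n + c_1 a^{n-1} + ⋯ + c_n = 0` with `c_i ∈ (I_>)^i`, then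
`v̄_I(c_i) > i`; so if `v̄_I(a) ≤ 1`, every term satisfies
`v̄_I(c_i a^{n-i}) > i + (n - i) v̄_I(a) ≥ n v̄_I(a) = v̄_I(a^n)`, which is impossible since
`a^n = -∑ c_i a^{n-i}`.
-/

open Topology ENNReal

theorem ENNReal.tendsto_natDiv_div_atTop {m : ℕ} (hm : m ≠ 0) :
    Tendsto (fun n : ℕ => ((n / m : ℕ) : ℝ≥0∞) / n) atTop (𝓝 (m : ℝ≥0∞)⁻¹) := by
  have hm' : (m : ℝ≥0∞) ≠ 0 := Nat.cast_ne_zero.2 hm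
  have lower : Tendsto (fun n : ℕ => (m : ℝ≥0∞)⁻¹ - (n : ℝ≥0∞)⁻¹) atTop (𝓝 (m : ℝ≥0∞)⁻¹) := by
    simpa using ENNReal.Tendsto.sub tendsto_const_nhds ENNReal.tendsto_inv_nat_nhds_zero
      (Or.inr zero_ne_top)
  refine tendsto_of_tendsto_of_tendsto_of_le_of_le' lower tendsto_const_nhds ?_ ?_
  · filter_upwards [eventually_ne_atTop 0] with n hn
    have hn' : (n : ℝ≥0∞) ≠ 0 := Nat.cast_ne_zero.2 hn
    rw [tsub_le_iff_right, div_eq_mul_inv, ← add_one_mul, ← div_eq_mul_inv,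
      ENNReal.le_div_iff_mul_le (Or.inl hn') (Or.inl (natCast_ne_top n)), mul_comm,
      ← div_eq_mul_inv, ENNReal.div_le_iff hm' (natCast_ne_top m)]
    have := Nat.lt_div_mul_add (a := n) (Nat.pos_of_ne_zero hm)
    exact_mod_cast (show n ≤ (n / m + 1) * m by rw [add_one_mul]; omega)
  · filter_upwards with n
    rw [ENNReal.div_le_iff_le_mul (Or.inr (ENNReal.inv_ne_top.2 hm')) (Or.inl (natCast_ne_top n)),
      mul_comm, ← div_eq_mul_inv,
      ENNReal.le_div_iff_mul_le (Or.inl hm') (Or.inl (natCast_ne_top m))]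
    exact_mod_cast Nat.div_mul_le_self n m

theorem ENNReal.eventually_lt_div_of_le_add {f : ℕ → ℝ≥0∞} {m : ℕ} (hm : m ≠ 0)
    {s t c : ℝ≥0∞} (ht : t ≠ ⊤) (hc : c < s / m) (hf : ∀ n, s * (n / m : ℕ) ≤ f n + t) :
    ∀ᶠ n in atTop, c < f n / n := by
  have hlim : Tendsto (fun n : ℕ => s * (n / m : ℕ) / n - t / n) atTop (𝓝 (s / m)) := by
    have := ENNReal.Tendsto.sub
      (ENNReal.Tendsto.const_mul (a := s) (ENNReal.tendsto_natDiv_div_atTop hm) (Or.inl (by simp)))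
      (ENNReal.Tendsto.const_mul ENNReal.tendsto_inv_nat_nhds_zero (Or.inr ht)) (Or.inr (by simp))
    simpa [mul_div_assoc, div_eq_mul_inv, mul_assoc] using this
  filter_upwards [hlim.eventually (lt_mem_nhds hc)] with n hn
  refine hn.trans_le (tsub_le_iff_right.2 ?_)
  rw [← ENNReal.add_div]
  exact ENNReal.div_le_div_right (hf n) _

theorem ENNReal.tendsto_div_of_superadditive {f : ℕ → ℝ≥0∞}
    (hf : ∀ m n, f m + f n ≤ f (m + n)) :
    Tendsto (fun n => f n / n) atTop (𝓝 (⨆ n : ℕ, f (n + 1) / (n + 1 : ℕ))) := by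
  have hmul : ∀ q m, q * f m ≤ f (q * m) := by
    intro q m
    induction q with
    | zero => simp
    | succ q ih =>
      calc ((q + 1 : ℕ) : ℝ≥0∞) * f m = q * f m + f m := by push_cast; ring
        _ ≤ f (q * m) + f m := by gcongr
        _ ≤ f ((q + 1) * m) := by rw [Nat.succ_mul]; exact hf _ _
  have hmono : Monotone f := monotone_nat_of_le_succ fun n => le_self_add.trans (hf n 1)
  rw [tendsto_order]
  refine ⟨fun c hc => ?_, fun c hc => ?_⟩
  · obtain ⟨k, hk⟩ := lt_iSup_iff.1 hc
    refine eventually_lt_div_of_le_add k.succ_ne_zero zero_ne_top hk fun n => ?_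
    rw [add_zero, mul_comm]
    exact (hmul _ _).trans (hmono (Nat.div_mul_le_self n (k + 1)))
  · filter_upwards [eventually_ne_atTop 0] with n hn
    obtain ⟨k, rfl⟩ := Nat.exists_eq_succ_of_ne_zero hn
    exact (le_iSup (fun k : ℕ => f (k + 1) / (k + 1 : ℕ)) k).trans_lt hc

namespace Ideal

variable {A : Type*} [CommRing A] (I : Ideal A)

theorem pow_mem_pow_mul_div {x : A} {m s : ℕ} (hx : x ^ m ∈ I ^ s) (n : ℕ) :
    x ^ n ∈ I ^ (s * (n / m)) := by
  rw [← Nat.div_add_mod n m, pow_add, pow_mul, Nat.div_add_mod, pow_mul]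
  exact mul_mem_right _ _ (pow_mem_pow hx _)

theorem add_pow_mem_pow {x y : A} {m s : ℕ} (hx : x ^ m ∈ I ^ s) (hy : y ^ m ∈ I ^ s) (n : ℕ) :
    (x + y) ^ n ∈ I ^ (s * (n / m - 1)) := by
  rw [add_pow]
  refine sum_mem _ fun j hj => mul_mem_right _ _ ?_
  have hsplit : n / m - 1 ≤ j / m + (n - j) / m := by
    have := Nat.add_div_le_div_add_div_add_one j (n - j) m
    rwa [Nat.add_sub_cancel' (Finset.mem_range_succ_iff.1 hj), ← tsub_le_iff_right] at this
  refine pow_le_pow_right (Nat.mul_le_mul_left s hsplit) ?_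
  rw [Nat.mul_add, pow_add]
  exact mul_mem_mul (pow_mem_pow_mul_div I hx j) (pow_mem_pow_mul_div I hy (n - j))

end Ideal

section Samuel

variable {A : Type*} [CommRing A] (I : Ideal A)

theorem natCast_le_ordI_iff {x : A} {s : ℕ} : (s : ℕ∞) ≤ ordI I x ↔ x ∈ I ^ s := by
  refine ⟨fun h => ?_, fun h => le_iSup₂_of_le s h le_rfl⟩
  by_contra hx
  have hs : s ≠ 0 := by rintro rfl; simp at hx
  have : ordI I x ≤ (s - 1 : ℕ) := iSup₂_le fun n hn => by
    have : n < s := lt_of_not_ge fun hsn => hx (Ideal.pow_le_pow_right hsn hn)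
    exact_mod_cast Nat.le_sub_one_of_lt this
  have := h.trans this
  norm_cast at this
  omega

theorem ordI_zero : ordI I (0 : A) = ⊤ :=
  ENat.eq_top_iff_forall_ge.2 fun _ => (natCast_le_ordI_iff I).2 (Submodule.zero_mem _)

theorem add_le_ordI_mul (x y : A) : ordI I x + ordI I y ≤ ordI I (x * y) := by
  have hsup : ∀ z : A, ordI I z = ⨆ n : {n // z ∈ I ^ n}, (n : ℕ∞) := fun _ => iSup_subtype'
  have : ∀ z : A, Nonempty {n // z ∈ I ^ n} := fun _ => ⟨⟨0, by simp⟩⟩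
  rw [hsup x, hsup y]
  refine ENat.iSup_add_iSup_le fun p q => ?_
  exact_mod_cast (natCast_le_ordI_iff I).2 (pow_add I p q ▸ Ideal.mul_mem_mul p.2 q.2)

theorem exists_mem_pow_of_lt_samuelSeq {x : A} {m : ℕ} (hm : m ≠ 0) {c : ℝ≥0∞}
    (hc : c < samuelSeq I x m) : ∃ s : ℕ, x ^ m ∈ I ^ s ∧ c < s / m := by
  have hm' : (m : ℝ≥0∞) ≠ 0 := Nat.cast_ne_zero.2 hm
  rw [samuelSeq, ENNReal.lt_div_iff_mul_lt (Or.inl hm') (Or.inl (natCast_ne_top m))] at hc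
  suffices ∃ s : ℕ, (s : ℕ∞) ≤ ordI I (x ^ m) ∧ c * m < s by
    obtain ⟨s, hs, hcs⟩ := this
    exact ⟨s, (natCast_le_ordI_iff I).1 hs,
      (ENNReal.lt_div_iff_mul_lt (Or.inl hm') (Or.inl (natCast_ne_top m))).2 hcs⟩
  generalize ordI I (x ^ m) = e at hc
  induction e using ENat.recTopCoe with
  | top =>
    obtain ⟨s, hs⟩ := ENNReal.exists_nat_gt (ne_top_of_lt hc)
    exact ⟨s, le_top, hs⟩
  | coe k => exact ⟨k, le_rfl, by simpa using hc⟩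

/-- `v̄_I`, defined as `sup_{n ≥ 1} ord_I(x^n)/n`; it is the limit by `tendsto_samuelSeq`. -/
noncomputable def asymptoticSamuel (x : A) : ℝ≥0∞ := ⨆ n : ℕ, samuelSeq I x (n + 1)

theorem tendsto_samuelSeq (x : A) :
    Tendsto (samuelSeq I x) atTop (𝓝 (asymptoticSamuel I x)) := by
  refine ENNReal.tendsto_div_of_superadditive fun m n => ?_
  rw [pow_add, ← ENat.toENNReal_add]
  exact ENat.toENNReal_le.2 (add_le_ordI_mul I _ _)

theorem memIgt_iff {x : A} : MemIgt I x ↔ 1 < asymptoticSamuel I x :=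
  ⟨fun ⟨_, hL, hx⟩ => tendsto_nhds_unique hx (tendsto_samuelSeq I x) ▸ hL,
    fun h => ⟨_, h, tendsto_samuelSeq I x⟩⟩

theorem asymptoticSamuel_zero : asymptoticSamuel I (0 : A) = ⊤ := by
  simp [asymptoticSamuel, samuelSeq, ordI_zero, ENNReal.top_div]

theorem add_le_asymptoticSamuel_mul (x y : A) :
    asymptoticSamuel I x + asymptoticSamuel I y ≤ asymptoticSamuel I (x * y) := by
  refine le_of_tendsto_of_tendsto' ((tendsto_samuelSeq I x).add (tendsto_samuelSeq I y))
    (tendsto_samuelSeq I (x * y)) fun n => ?_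
  rw [samuelSeq, samuelSeq, samuelSeq, ENNReal.div_add_div_same, mul_pow, ← ENat.toENNReal_add]
  exact ENNReal.div_le_div_right (ENat.toENNReal_le.2 (add_le_ordI_mul I _ _)) _

theorem asymptoticSamuel_le_mul_left (r x : A) :
    asymptoticSamuel I x ≤ asymptoticSamuel I (r * x) :=
  le_add_self.trans (add_le_asymptoticSamuel_mul I r x)

theorem asymptoticSamuel_pow (x : A) {k : ℕ} (hk : k ≠ 0) :
    asymptoticSamuel I (x ^ k) = k * asymptoticSamuel I x := by
  have hk' : (k : ℝ≥0∞) ≠ 0 := Nat.cast_ne_zero.2 hk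
  have hseq : samuelSeq I (x ^ k) = fun n => k * samuelSeq I x (k * n) := by
    ext n
    rw [samuelSeq, samuelSeq, ← pow_mul, ← mul_div_assoc, Nat.cast_mul,
      ENNReal.mul_div_mul_left _ _ hk' (natCast_ne_top k)]
  refine tendsto_nhds_unique (tendsto_samuelSeq I (x ^ k)) ?_
  rw [hseq]
  refine ENNReal.Tendsto.const_mul ((tendsto_samuelSeq I x).comp ?_) (Or.inr (natCast_ne_top k))
  exact tendsto_atTop_mono (fun n => Nat.le_mul_of_pos_left n (Nat.pos_of_ne_zero hk)) tendsto_id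

theorem natCast_mul_le_asymptoticSamuel_pow (x : A) (k : ℕ) :
    k * asymptoticSamuel I x ≤ asymptoticSamuel I (x ^ k) := by
  rcases eq_or_ne k 0 with rfl | hk
  · simp
  · exact (asymptoticSamuel_pow I x hk).ge

theorem min_le_asymptoticSamuel_add (x y : A) :
    min (asymptoticSamuel I x) (asymptoticSamuel I y) ≤ asymptoticSamuel I (x + y) := by
  refine le_of_forall_lt_imp_le_of_dense fun c hc => ?_
  obtain ⟨M, hMx, hMy, hM⟩ :=
    (((tendsto_samuelSeq I x).eventually (lt_mem_nhds (lt_min_iff.1 hc).1)).and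
      (((tendsto_samuelSeq I y).eventually (lt_mem_nhds (lt_min_iff.1 hc).2)).and
        (eventually_ne_atTop 0))).exists
  -- At a common exponent `M`, both `x ^ M` and `y ^ M` lie in `I ^ S` with `c < S / M`; the
  -- binomial theorem then puts `(x + y) ^ n` in `I ^ (S * (n / M - 1))`.
  obtain ⟨s, hxs, hcs⟩ := exists_mem_pow_of_lt_samuelSeq I hM hMx
  obtain ⟨s', hys, hcs'⟩ := exists_mem_pow_of_lt_samuelSeq I hM hMy
  have hcS : c < (min s s' : ℕ) / M := by
    rcases min_choice s s' with h | h <;> rw [h] <;> assumption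
  set S := min s s'
  have hxS : x ^ M ∈ I ^ S := Ideal.pow_le_pow_right (min_le_left s s') hxs
  have hyS : y ^ M ∈ I ^ S := Ideal.pow_le_pow_right (min_le_right s s') hys
  have hev : ∀ᶠ n in atTop, c < samuelSeq I (x + y) n := by
    refine ENNReal.eventually_lt_div_of_le_add (f := fun n => ordI I ((x + y) ^ n)) hM
      (natCast_ne_top S) hcS fun n => ?_
    have hord := (natCast_le_ordI_iff I).2 (Ideal.add_pow_mem_pow I hxS hyS n)
    have hfloor : S * (n / M) ≤ S * (n / M - 1) + S := by
      rw [← Nat.mul_add_one]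
      exact Nat.mul_le_mul_left S (by omega)
    calc (S : ℝ≥0∞) * (n / M : ℕ) ≤ (S * (n / M - 1) : ℕ) + S := by exact_mod_cast hfloor
      _ ≤ ordI I ((x + y) ^ n) + S := by
        gcongr
        simpa using ENat.toENNReal_le.2 hord
  exact ge_of_tendsto (tendsto_samuelSeq I (x + y)) (hev.mono fun _ => le_of_lt)

theorem lt_asymptoticSamuel_sum {ι : Type*} (s : Finset ι) (f : ι → A) {c : ℝ≥0∞} (hc : c ≠ ⊤)
    (h : ∀ i ∈ s, c < asymptoticSamuel I (f i)) : c < asymptoticSamuel I (∑ i ∈ s, f i) :=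
  Finset.sum_induction f (fun z => c < asymptoticSamuel I z)
    (fun _ _ hx hy => (lt_min hx hy).trans_le (min_le_asymptoticSamuel_add I _ _))
    (by rwa [asymptoticSamuel_zero, lt_top_iff_ne_top]) h

theorem natCast_lt_asymptoticSamuel_of_mem_pow {K : Ideal A}
    (hK : ∀ x ∈ K, 1 < asymptoticSamuel I x) {i : ℕ} (hi : i ≠ 0) {x : A} (hx : x ∈ K ^ i) :
    i < asymptoticSamuel I x := by
  induction i, Nat.one_le_iff_ne_zero.2 hi using Nat.le_induction generalizing x with
  | base => simpa using hK x (by simpa using hx)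
  | succ i hi ih =>
    rw [pow_succ] at hx
    refine Submodule.mul_induction_on hx (fun p hp r hr => ?_)
      fun y z hy hz => (lt_min hy hz).trans_le (min_le_asymptoticSamuel_add I y z)
    calc ((i + 1 : ℕ) : ℝ≥0∞) = i + 1 := by push_cast; rfl
      _ < asymptoticSamuel I p + asymptoticSamuel I r :=
        ENNReal.add_lt_add (ih (by omega) hp) (hK r hr)
      _ ≤ asymptoticSamuel I (p * r) := add_le_asymptoticSamuel_mul I p r

theorem one_lt_asymptoticSamuel_of_integralOverIdeal {K : Ideal A}
    (hK : ∀ x ∈ K, 1 < asymptoticSamuel I x) {a : A} (ha : IntegralOverIdeal K a) :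
    1 < asymptoticSamuel I a := by
  obtain ⟨n, hn, c, hc, heq⟩ := ha
  by_contra! hle
  set v := asymptoticSamuel I a
  have hv : v ≠ ⊤ := ne_top_of_le_ne_top one_ne_top hle
  have hterm : ∀ i ∈ Finset.Icc 1 n, n * v < asymptoticSamuel I (c i * a ^ (n - i)) := by
    intro i hi
    obtain ⟨hi1, hin⟩ := Finset.mem_Icc.1 hi
    calc (n : ℝ≥0∞) * v = i * v + (n - i : ℕ) * v := by
          rw [← add_mul, ← Nat.cast_add, Nat.add_sub_cancel' hin]
      _ ≤ i + (n - i : ℕ) * v := by gcongr; exact mul_le_of_le_one_right' hle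
      _ < asymptoticSamuel I (c i) + asymptoticSamuel I (a ^ (n - i)) :=
          ENNReal.add_lt_add_of_lt_of_le (mul_ne_top (natCast_ne_top _) hv)
            (natCast_lt_asymptoticSamuel_of_mem_pow I hK (by omega) (hc i))
            (natCast_mul_le_asymptoticSamuel_pow I a (n - i))
      _ ≤ _ := add_le_asymptoticSamuel_mul I _ _
  have hsum := lt_asymptoticSamuel_sum I _ _ (mul_ne_top (natCast_ne_top n) hv) hterm
  have hpow : asymptoticSamuel I (a ^ n) = n * v := asymptoticSamuel_pow I a hn.ne'
  rw [eq_neg_of_add_eq_zero_left heq, neg_eq_neg_one_mul] at hpow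
  exact (hsum.trans_le (asymptoticSamuel_le_mul_left I _ _)).ne' hpow

end Samuel

theorem igt_integrallyClosed {A : Type*} [CommRing A]
    (I : Ideal A)
    (K : Ideal A) (hK : ∀ x : A, x ∈ K ↔ MemIgt I x)
    (a : A) (ha : IntegralOverIdeal K a) : a ∈ K :=
  (hK a).2 <| (memIgt_iff I).2 <| one_lt_asymptoticSamuel_of_integralOverIdeal I
    (fun x hx => (memIgt_iff I).1 ((hK x).1 hx)) ha
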